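/- Dyadic cube decomposition of a well shaped set, cardinality bound: let m ≥ 1, let Ω ⊆ 𝕋_m be well shaped with constant C, and fix γ ∈ 𝕋_m. For a positive integer k let C(k) be the set of cubes of the form ∏_{j=1}^m [γ_j + u_j/k, γ_j + (u_j+1)/k] (taken modulo 1, u ∈ ℤ^m) that are contained in Ω. Define B_1 = C(2) and, for i ≥ 2, let B_i be the set of cubes in C(2^i) not contained in any cube of C(2^{i−1}). Then #B_i ≤ c · 2^{i(m−1)} for all i ≥ 1, where c depends only on m and C. -/

import Mathlib

open MeasureTheory

noncomputable section

abbrev Torus (m : ℕ) : Type := Fin m → AddCircle (1 : ℝ)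

noncomputable def tmeas {m : ℕ} (Ω : Set (Torus m)) : ℝ := (volume Ω).toReal

noncomputable def torusDist {m : ℕ} (u w : Torus m) : ℝ :=
  Real.sqrt (∑ i, dist (u i) (w i) ^ 2)

noncomputable def torusDistSet {m : ℕ} (u : Torus m) (Ω : Set (Torus m)) : ℝ :=
  ⨅ w : Ω, torusDist u (w : Torus m)

def outerShell {m : ℕ} (Ω : Set (Torus m)) (ε : ℝ) : Set (Torus m) :=
  {u | u ∉ Ω ∧ torusDistSet u Ω < ε}

def innerShell {m : ℕ} (Ω : Set (Torus m)) (ε : ℝ) : Set (Torus m) :=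
  {u | u ∈ Ω ∧ torusDistSet u Ωᶜ < ε}

def IsWellShaped {m : ℕ} (Ω : Set (Torus m)) (C : ℝ) : Prop :=
  ∀ ε : ℝ, 0 < ε →
    tmeas (outerShell Ω ε) ≤ C * ε ∧ tmeas (innerShell Ω ε) ≤ C * ε

def IsVeryWellShaped {m : ℕ} (Ω : Set (Torus m)) (C : ℝ) : Prop :=
  ∀ ε : ℝ, 0 < ε →
    tmeas (outerShell Ω ε) ≤ C * (tmeas Ω ^ (1 - 1 / (m : ℝ)) * ε + ε ^ m) ∧
    tmeas (innerShell Ω ε) ≤ C * (tmeas Ω ^ (1 - 1 / (m : ℝ)) * ε + ε ^ m)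

noncomputable def discrepancy {ι : Type*} {n : ℕ} (s : Set ι) (ξ : ι → Fin n → ℝ) : ℝ :=
  if s.ncard = 0 then 1
  else
    ⨆ B : {B : (Fin n → ℝ) × (Fin n → ℝ) // ∀ j, 0 ≤ B.1 j ∧ B.1 j ≤ B.2 j ∧ B.2 j ≤ 1},
      |((s ∩ {k | ∀ j, B.val.1 j ≤ ξ k j ∧ ξ k j < B.val.2 j}).ncard : ℝ) / (s.ncard : ℝ)
        - ∏ j, (B.val.2 j - B.val.1 j)|

noncomputable def torusPt (p : ℕ) {m : ℕ} (x : Fin m → Fin p) : Torus m :=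
  fun i => ((((x i : ℕ) : ℝ) / (p : ℝ) : ℝ) : AddCircle (1 : ℝ))

noncomputable def fracPt {p m n : ℕ} (G : Fin n → MvPolynomial (Fin m) (ZMod p))
    (x : Fin m → ℤ) : Fin n → ℝ :=
  fun j => ((MvPolynomial.eval (fun i => ((x i : ℤ) : ZMod p)) (G j)).val : ℝ) / (p : ℝ)

def Degree2Independent {p m n : ℕ} (G : Fin n → MvPolynomial (Fin m) (ZMod p)) : Prop :=
  ∀ a : Fin n → ZMod p, a ≠ 0 → 2 ≤ (∑ j, a j • G j).totalDegree

def torusIcc (a b : ℝ) : Set (AddCircle (1 : ℝ)) :=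
  (fun r : ℝ => (r : AddCircle (1 : ℝ))) '' Set.Icc a b

def gridCube {m : ℕ} (γ : Fin m → ℝ) (k : ℕ) (u : Fin m → ℤ) : Set (Torus m) :=
  {t | ∀ i, t i ∈ torusIcc (γ i + (u i : ℝ) / k) (γ i + ((u i : ℝ) + 1) / k)}

def torusCube {m : ℕ} (γ : Fin m → ℝ) (s : ℝ) : Set (Torus m) :=
  {t | ∀ i, t i ∈ torusIcc (γ i) (γ i + s)}

def cubesIn {m : ℕ} (Ω : Set (Torus m)) (γ : Fin m → ℝ) (k : ℕ) : Set (Set (Torus m)) :=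
  {Γ | (∃ u : Fin m → ℤ, Γ = gridCube γ k u) ∧ Γ ⊆ Ω}

def dyadicB {m : ℕ} (Ω : Set (Torus m)) (γ : Fin m → ℝ) (i : ℕ) : Set (Set (Torus m)) :=
  if i = 1 then cubesIn Ω γ 2
  else {Γ | Γ ∈ cubesIn Ω γ (2 ^ i) ∧ ∀ Γ' ∈ cubesIn Ω γ (2 ^ (i - 1)), ¬ Γ ⊆ Γ'}

def polySolutions (p : ℕ) {m n : ℕ} (F : Fin n → MvPolynomial (Fin m) ℤ) :
    Set (Fin m → Fin p) :=
  {x | ∀ j, ((MvPolynomial.eval (fun i => ((x i : ℕ) : ℤ)) (F j) : ℤ) : ZMod p) = 0}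

noncomputable def Tcount (p : ℕ) {m n : ℕ} (F : Fin n → MvPolynomial (Fin m) ℤ)
    (S : Set (Torus m)) : ℕ :=
  (polySolutions p F ∩ {x | torusPt p x ∈ S}).ncard

end

/-!
A cube of `B_i` (`i ≥ 2`) lies in `Ω` while its parent cube of side `2 ^ (1 - i)` does not, so
each of its points is within `√m 2 ^ (1 - i)` of the complement of `Ω`: the cubes of `B_i` lie in
the inner shell `Ω⁻_ε` with `ε = 4 √m 2 ^ (-i)`. They have volume `2 ^ (-i m)` and overlap only
on faces, so `#B_i 2 ^ (-i m) ≤ μ(Ω⁻_ε) ≤ C ε`, i.e. `#B_i ≤ 4 √m C 2 ^ (i (m - 1))`. For `i = 1`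
(and for `m = 0`) the trivial bound `#B_i ≤ 2 ^ (i m)` suffices.
-/

open Set MeasureTheory Function
open scoped ENNReal

lemma UnitAddCircle.coe_add_intCast (x : ℝ) (n : ℤ) : ((x + n : ℝ) : AddCircle (1 : ℝ)) = x := by
  rw [AddCircle.coe_add, add_eq_left, AddCircle.coe_eq_zero_iff]
  exact ⟨n, by simp⟩

lemma torusIcc_add_intCast (a b : ℝ) (n : ℤ) : torusIcc (a + n) (b + n) = torusIcc a b := by
  rw [torusIcc, ← image_add_const_Icc, image_image]
  exact image_congr fun x _ => UnitAddCircle.coe_add_intCast x n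

lemma dist_le_of_mem_torusIcc {a b : ℝ} {x y : AddCircle (1 : ℝ)} (hx : x ∈ torusIcc a b)
    (hy : y ∈ torusIcc a b) : dist x y ≤ b - a := by
  obtain ⟨x, ⟨hxa, hxb⟩, rfl⟩ := hx
  obtain ⟨y, ⟨hya, hyb⟩, rfl⟩ := hy
  calc dist (x : AddCircle (1 : ℝ)) y ≤ dist x y := by
        rw [dist_eq_norm, dist_eq_norm, ← AddCircle.coe_sub]
        exact QuotientAddGroup.norm_mk_le_norm
    _ ≤ b - a := by rw [Real.dist_eq, abs_sub_le_iff]; constructor <;> linarith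

section TorusDist

variable {m : ℕ}

lemma torusDist_le_of_forall_dist_le {t b : Torus m} {δ : ℝ} (hδ : 0 ≤ δ)
    (h : ∀ i, dist (t i) (b i) ≤ δ) : torusDist t b ≤ √m * δ := by
  rw [torusDist, ← Real.sqrt_sq hδ, ← Real.sqrt_mul (Nat.cast_nonneg m)]
  gcongr
  calc ∑ i, dist (t i) (b i) ^ 2 ≤ ∑ _i : Fin m, δ ^ 2 :=
        Finset.sum_le_sum fun i _ => pow_le_pow_left₀ dist_nonneg (h i) 2
    _ = m * δ ^ 2 := by simp

lemma torusDistSet_le_torusDist (t : Torus m) {Ω : Set (Torus m)} {b : Torus m} (hb : b ∈ Ω) :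
    torusDistSet t Ω ≤ torusDist t b :=
  ciInf_le ⟨0, by rintro _ ⟨w, rfl⟩; exact Real.sqrt_nonneg _⟩ (⟨b, hb⟩ : Ω)

lemma subset_innerShell_of_torusDist_lt {Ω Γ : Set (Torus m)} {b : Torus m} {ε : ℝ}
    (hΓΩ : Γ ⊆ Ω) (hb : b ∉ Ω) (hdist : ∀ t ∈ Γ, torusDist t b < ε) :
    Γ ⊆ innerShell Ω ε :=
  fun t ht => ⟨hΓΩ ht, (torusDistSet_le_torusDist t (Ω := Ωᶜ) hb).trans_lt (hdist t ht)⟩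

end TorusDist

section GridCube

variable {m : ℕ} (γ : Fin m → ℝ)

lemma gridCube_add_mul {k : ℕ} (hk : k ≠ 0) (u n : Fin m → ℤ) :
    gridCube γ k (fun i => u i + k * n i) = gridCube γ k u := by
  have hk' : (k : ℝ) ≠ 0 := Nat.cast_ne_zero.mpr hk
  ext t
  refine forall_congr' fun i => ?_
  have hlo : γ i + ((u i + k * n i : ℤ) : ℝ) / k = γ i + u i / k + n i := by
    push_cast; field_simp; ring
  have hhi : γ i + (((u i + k * n i : ℤ) : ℝ) + 1) / k = γ i + (u i + 1) / k + n i := by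
    push_cast; field_simp; ring
  rw [hlo, hhi, torusIcc_add_intCast]

lemma gridCube_emod {k : ℕ} (hk : k ≠ 0) (u : Fin m → ℤ) :
    gridCube γ k (fun i => u i % k) = gridCube γ k u := by
  rw [← gridCube_add_mul γ hk _ (fun i => u i / k)]
  simp only [Int.emod_add_mul_ediv]

lemma gridCube_two_mul_subset (k : ℕ) (u : Fin m → ℤ) :
    gridCube γ (2 * k) u ⊆ gridCube γ k (fun i => u i / 2) := by
  intro t ht i
  have hdiv : ∀ x : ℝ, x / ((2 * k : ℕ) : ℝ) = x / 2 / k := fun x => by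
    push_cast; rw [div_div]
  have hlo : ((u i / 2 : ℤ) : ℝ) ≤ u i / 2 := by
    rw [le_div_iff₀ two_pos]; exact_mod_cast (by omega : u i / 2 * 2 ≤ u i)
  have hhi : ((u i : ℝ) + 1) / 2 ≤ ((u i / 2 : ℤ) : ℝ) + 1 := by
    rw [div_le_iff₀ two_pos]; exact_mod_cast (by omega : u i + 1 ≤ (u i / 2 + 1) * 2)
  refine image_mono (Icc_subset_Icc ?_ ?_) (ht i) <;> rw [hdiv] <;> gcongr

lemma torusDist_le_of_mem_gridCube {k : ℕ} {u : Fin m → ℤ} {t b : Torus m}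
    (ht : t ∈ gridCube γ k u) (hb : b ∈ gridCube γ k u) : torusDist t b ≤ √m / k := by
  rw [div_eq_mul_one_div]
  refine torusDist_le_of_forall_dist_le (by positivity) fun i => ?_
  convert dist_le_of_mem_torusIcc (ht i) (hb i) using 1
  ring

end GridCube

section Packing

variable {m : ℕ} (γ : Fin m → ℝ)

def gridCubes (k : ℕ) : Set (Set (Torus m)) := range (gridCube γ k)

lemma cubesIn_subset_gridCubes (Ω : Set (Torus m)) (k : ℕ) : cubesIn Ω γ k ⊆ gridCubes γ k :=
  fun _ ⟨⟨u, hu⟩, _⟩ => ⟨u, hu.symm⟩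

lemma gridCubes_eq_range_fin {k : ℕ} (hk : k ≠ 0) :
    gridCubes γ k = range fun v : Fin m → Fin k => gridCube γ k fun i => (v i : ℤ) := by
  refine (range_subset_iff.mpr fun u => ?_).antisymm (by rintro _ ⟨v, rfl⟩; exact ⟨_, rfl⟩)
  have hk' : (k : ℤ) ≠ 0 := by omega
  refine ⟨fun i => ⟨(u i % k).toNat, by
    have := Int.emod_lt_of_pos (u i) (by omega : (0 : ℤ) < k); omega⟩, ?_⟩
  rw [← gridCube_emod γ hk]
  refine congrArg (gridCube γ k) (funext fun i => ?_)
  exact Int.toNat_of_nonneg (Int.emod_nonneg _ hk')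

lemma ncard_le_pow_of_subset_gridCubes {k : ℕ} (hk : k ≠ 0) {B : Set (Set (Torus m))}
    (hB : B ⊆ gridCubes γ k) : B.ncard ≤ k ^ m := by
  rw [gridCubes_eq_range_fin γ hk, ← image_univ] at hB
  calc B.ncard ≤ (univ : Set (Fin m → Fin k)).ncard :=
        (ncard_le_ncard hB (toFinite _)).trans (ncard_image_le (toFinite _))
    _ = k ^ m := by simp

def gridBox (k : ℕ) (u : Fin m → ℤ) : Set (Fin m → ℝ) :=
  pi univ fun i => Ioc (γ i + u i / k) (γ i + (u i + 1) / k)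

def torusProj (x : Fin m → ℝ) : Torus m := fun i => x i

lemma measurePreserving_torusProj :
    MeasurePreserving torusProj
      (volume.restrict (pi univ fun i => Ioc (γ i) (γ i + 1))) volume := by
  rw [volume_pi, Measure.restrict_pi_pi]
  exact measurePreserving_pi _ _ fun i => UnitAddCircle.measurePreserving_mk (γ i)

lemma volume_gridBox {k : ℕ} (hk : k ≠ 0) (u : Fin m → ℤ) :
    volume (gridBox γ k u) = (k : ℝ≥0∞)⁻¹ ^ m := by
  have hlen : ∀ i, γ i + (u i + 1) / k - (γ i + u i / k) = (k : ℝ)⁻¹ := fun i => by ring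
  simp only [gridBox, Real.volume_pi_Ioc, hlen, Finset.prod_const, Finset.card_univ,
    Fintype.card_fin]
  rw [ENNReal.ofReal_inv_of_pos (by positivity), ENNReal.ofReal_natCast]

lemma pairwise_disjoint_gridBox (k : ℕ) : Pairwise (Disjoint on gridBox γ k) := by
  intro u v huv
  obtain ⟨i, hi⟩ := Function.ne_iff.mp huv
  refine disjoint_univ_pi.mpr ⟨i, ?_⟩
  rcases hi.lt_or_gt with h | h
  · have : (u i : ℝ) + 1 ≤ v i := by exact_mod_cast Int.add_one_le_iff.mpr h
    exact Ioc_disjoint_Ioc_of_le (by gcongr)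
  · have : (v i : ℝ) + 1 ≤ u i := by exact_mod_cast Int.add_one_le_iff.mpr h
    exact (Ioc_disjoint_Ioc_of_le (by gcongr)).symm

lemma gridBox_subset_Ioc {k : ℕ} (v : Fin m → Fin k) :
    gridBox γ k (fun i => (v i : ℤ)) ⊆ pi univ fun i => Ioc (γ i) (γ i + 1) := by
  refine pi_mono fun i _ => Ioc_subset_Ioc ?_ ?_
  · simp only [Int.cast_natCast, le_add_iff_nonneg_right]
    positivity
  · have hk : (0 : ℝ) < k := by exact_mod_cast (v i).pos
    have hv : ((v i : ℕ) : ℝ) + 1 ≤ k := by exact_mod_cast (v i).isLt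
    simp only [Int.cast_natCast, add_le_add_iff_left]
    exact (div_le_one hk).mpr hv

lemma gridBox_subset_preimage_gridCube (k : ℕ) (u : Fin m → ℤ) :
    gridBox γ k u ⊆ torusProj ⁻¹' gridCube γ k u :=
  fun x hx i => ⟨x i, Ioc_subset_Icc_self (hx i (mem_univ i)), rfl⟩

/-- The closed grid cubes overlap on their faces; the half-open boxes lifting them to `ℝ^m` are
disjoint, and `torusProj` is measure preserving on the fundamental box they lie in. -/
lemma ncard_mul_inv_pow_le_volume {k : ℕ} (hk : k ≠ 0) {B : Set (Set (Torus m))}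
    (hB : B ⊆ gridCubes γ k) {S : Set (Torus m)} (hBS : ∀ Γ ∈ B, Γ ⊆ S) :
    (B.ncard : ℝ≥0∞) * (k : ℝ≥0∞)⁻¹ ^ m ≤ volume S := by
  classical
  let cube : (Fin m → Fin k) → Set (Torus m) := fun v => gridCube γ k fun i => (v i : ℤ)
  let box : (Fin m → Fin k) → Set (Fin m → ℝ) := fun v => gridBox γ k fun i => (v i : ℤ)
  let V : Finset (Fin m → Fin k) := {v | cube v ∈ B}
  have hBV : B ⊆ cube '' V := by
    intro Γ hΓ
    obtain ⟨v, rfl⟩ : Γ ∈ range cube := gridCubes_eq_range_fin γ hk ▸ hB hΓ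
    exact ⟨v, by simpa [V] using hΓ, rfl⟩
  have hcard : B.ncard ≤ V.card :=
    (ncard_le_ncard hBV (toFinite _)).trans
      ((ncard_image_le (toFinite _)).trans_eq (ncard_coe_finset V))
  have hinj : Injective fun (v : Fin m → Fin k) i => (v i : ℤ) :=
    fun v w h => funext fun i => Fin.ext (by simpa using congrFun h i)
  have hdisj : (V : Set (Fin m → Fin k)).PairwiseDisjoint box :=
    ((pairwise_disjoint_gridBox γ k).comp_of_injective hinj).set_pairwise _
  have hsub :
      (⋃ v ∈ V, box v) ⊆ torusProj ⁻¹' S ∩ pi univ fun i => Ioc (γ i) (γ i + 1) := by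
    refine iUnion₂_subset fun v hv => subset_inter ?_ (gridBox_subset_Ioc γ v)
    exact (gridBox_subset_preimage_gridCube γ k _).trans
      (preimage_mono (hBS _ (by simpa [V] using hv)))
  calc (B.ncard : ℝ≥0∞) * (k : ℝ≥0∞)⁻¹ ^ m ≤ V.card * (k : ℝ≥0∞)⁻¹ ^ m := by gcongr
    _ = ∑ v ∈ V, volume (box v) := by simp [box, volume_gridBox γ hk]
    _ = volume (⋃ v ∈ V, box v) := (measure_biUnion_finset hdisj fun v _ =>
          MeasurableSet.univ_pi fun _ => measurableSet_Ioc).symm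
    _ ≤ volume.restrict (pi univ fun i => Ioc (γ i) (γ i + 1)) (torusProj ⁻¹' S) :=
        (measure_mono hsub).trans (Measure.le_restrict_apply _ _)
    _ ≤ volume S := by
        rw [← (measurePreserving_torusProj γ).map_eq]
        exact Measure.le_map_apply (measurePreserving_torusProj γ).measurable.aemeasurable S

lemma ncard_div_pow_le_tmeas {k : ℕ} (hk : k ≠ 0) {B : Set (Set (Torus m))}
    (hB : B ⊆ gridCubes γ k) {S : Set (Torus m)} (hBS : ∀ Γ ∈ B, Γ ⊆ S) :
    (B.ncard : ℝ) / k ^ m ≤ tmeas S := by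
  simpa [tmeas, div_eq_mul_inv] using
    ENNReal.toReal_mono (measure_ne_top _ _) (ncard_mul_inv_pow_le_volume γ hk hB hBS)

end Packing

section Dyadic

variable {m : ℕ} (Ω : Set (Torus m)) (γ : Fin m → ℝ)

lemma dyadicB_subset_cubesIn (i : ℕ) : dyadicB Ω γ i ⊆ cubesIn Ω γ (2 ^ i) := by
  unfold dyadicB
  split_ifs with hi
  · rw [hi, pow_one]
  · exact fun _ hΓ => hΓ.1

lemma ncard_dyadicB_le (i : ℕ) : (dyadicB Ω γ i).ncard ≤ 2 ^ (i * m) := by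
  rw [pow_mul]
  exact ncard_le_pow_of_subset_gridCubes γ (by positivity)
    ((dyadicB_subset_cubesIn Ω γ i).trans (cubesIn_subset_gridCubes γ Ω _))

variable {Ω γ}

lemma subset_innerShell_of_mem_dyadicB {i : ℕ} (hi : 2 ≤ i) {ε : ℝ}
    (hε : 2 * √m / 2 ^ i < ε) {Γ : Set (Torus m)} (hΓ : Γ ∈ dyadicB Ω γ i) :
    Γ ⊆ innerShell Ω ε := by
  rw [dyadicB, if_neg (by omega)] at hΓ
  obtain ⟨⟨⟨u, rfl⟩, hΓΩ⟩, hmax⟩ := hΓ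
  have hpow : 2 ^ i = 2 * 2 ^ (i - 1) := by rw [← pow_succ']; congr 1; omega
  set P := gridCube γ (2 ^ (i - 1)) fun j => u j / 2
  have hΓP : gridCube γ (2 ^ i) u ⊆ P := hpow ▸ gridCube_two_mul_subset γ _ u
  obtain ⟨b, hbP, hbΩ⟩ := not_subset.mp fun hPΩ => hmax P ⟨⟨_, rfl⟩, hPΩ⟩ hΓP
  refine subset_innerShell_of_torusDist_lt hΓΩ hbΩ fun t ht => ?_
  calc torusDist t b ≤ √m / (2 ^ (i - 1) : ℕ) :=
        torusDist_le_of_mem_gridCube γ (hΓP ht) hbP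
    _ = 2 * √m / 2 ^ i := by
        rw [show (2 : ℝ) ^ i = 2 * 2 ^ (i - 1) by exact_mod_cast hpow]
        push_cast; field_simp
    _ < ε := hε

lemma ncard_dyadicB_le_of_isWellShaped (hm : m ≠ 0) {C : ℝ} (hΩ : IsWellShaped Ω C) {i : ℕ}
    (hi : 2 ≤ i) : ((dyadicB Ω γ i).ncard : ℝ) ≤ 4 * √m * C * 2 ^ (i * (m - 1)) := by
  have hsqrt : 0 < √m := Real.sqrt_pos.mpr (by positivity)
  have hε : 2 * √m / 2 ^ i < 4 * √m / 2 ^ i := by gcongr; norm_num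
  have hpack := ncard_div_pow_le_tmeas γ (by positivity)
    ((dyadicB_subset_cubesIn Ω γ i).trans (cubesIn_subset_gridCubes γ Ω _))
    fun Γ hΓ => subset_innerShell_of_mem_dyadicB hi hε hΓ
  have hpow : ((2 ^ i : ℕ) : ℝ) ^ m = 2 ^ i * 2 ^ (i * (m - 1)) := by
    have hexp : i * m = i + i * (m - 1) := by
      rw [Nat.mul_sub_one]; have := Nat.le_mul_of_pos_right i (Nat.pos_of_ne_zero hm); omega
    push_cast; rw [← pow_mul, ← pow_add, hexp]
  calc ((dyadicB Ω γ i).ncard : ℝ)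
      = (dyadicB Ω γ i).ncard / ((2 ^ i : ℕ) : ℝ) ^ m * ((2 ^ i : ℕ) : ℝ) ^ m := by
        field_simp
    _ ≤ C * (4 * √m / 2 ^ i) * ((2 ^ i : ℕ) : ℝ) ^ m := by
        gcongr; exact hpack.trans (hΩ _ (by positivity)).2
    _ = 4 * √m * C * 2 ^ (i * (m - 1)) := by rw [hpow]; field_simp

end Dyadic

theorem dyadicB_card_well_shaped_general (m : ℕ) (C : ℝ) :
    ∃ c : ℝ, 0 < c ∧
      ∀ Ω : Set (Torus m), IsWellShaped Ω C → ∀ γ : Fin m → ℝ, ∀ i : ℕ, 1 ≤ i →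
        ((dyadicB Ω γ i).ncard : ℝ) ≤ c * 2 ^ (i * (m - 1)) := by
  refine ⟨2 ^ m + 4 * √m * |C|, by positivity, fun Ω hΩ γ i hi => ?_⟩
  by_cases hsmall : i = 1 ∨ m = 0
  · have hexp : i * m ≤ m + i * (m - 1) := by rcases hsmall with rfl | rfl <;> omega
    calc ((dyadicB Ω γ i).ncard : ℝ) ≤ 2 ^ (i * m) := mod_cast ncard_dyadicB_le Ω γ i
      _ ≤ 2 ^ m * 2 ^ (i * (m - 1)) := by
          rw [← pow_add]; exact pow_le_pow_right₀ one_le_two hexp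
      _ ≤ (2 ^ m + 4 * √m * |C|) * 2 ^ (i * (m - 1)) := by
          gcongr; exact le_add_of_nonneg_right (by positivity)
  · push Not at hsmall
    calc ((dyadicB Ω γ i).ncard : ℝ) ≤ 4 * √m * C * 2 ^ (i * (m - 1)) :=
          ncard_dyadicB_le_of_isWellShaped hsmall.2 hΩ (by omega)
      _ ≤ (2 ^ m + 4 * √m * |C|) * 2 ^ (i * (m - 1)) := by
          gcongr
          exact (mul_le_mul_of_nonneg_left (le_abs_self C) (by positivity)).trans
            (le_add_of_nonneg_left (by positivity))

/-- Dyadic cube decomposition of a well shaped set: `#B_i ≤ c 2^{i(m−1)}` with `c = c(m,C)`. -/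
theorem dyadicB_card_well_shaped (m : ℕ) (hm : 1 ≤ m) (C : ℝ) :
    ∃ c : ℝ, 0 < c ∧
      ∀ Ω : Set (Torus m), IsWellShaped Ω C → ∀ γ : Fin m → ℝ, ∀ i : ℕ, 1 ≤ i →
        ((dyadicB Ω γ i).ncard : ℝ) ≤ c * 2 ^ (i * (m - 1)) :=
  dyadicB_card_well_shaped_general m C
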